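/- arXiv:2407.02912 — 3 statements merged into one kernel-verified Lean document; each statement's English description precedes it below -/
import Mathlib

section
/- Let v₁, v₂ be unit vectors in ℝ² making angle 2θ with π/4 < θ < π/2, and set v₃ = −(v₁+v₂)/|v₁+v₂|. Then for any 2×2 matrix F with Fv₃^⊥ ≠ 0, the inequality Fv₁ · Fv₂ > 0 holds if and only if |Fv₃|/|Fv₃^⊥| > sin θ / cos θ. -/
noncomputable section

def dot2 (a b : Fin 2 → ℝ) : ℝ := a 0 * b 0 + a 1 * b 1

def norm2 (a : Fin 2 → ℝ) : ℝ := Real.sqrt (dot2 a a)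

def perp (a : Fin 2 → ℝ) : Fin 2 → ℝ := ![-(a 1), a 0]

/-!
Let `u` be `v₁` rotated by `θ`, the unit bisector of `v₁` and `v₂`, so that `v₃ = -u`. Then
`v₁` and `v₂` are `u` rotated by `∓θ`, i.e. `cos θ • u ∓ sin θ • u^⊥`, and by linearity of `F`
the product `Fv₁ · Fv₂` polarizes to `cos² θ |Fu|² - sin² θ |Fu^⊥|²`. Its positivity is the
claimed inequality after taking square roots.
-/

open Real Matrix

@[simp] lemma perp_apply_zero (a : Fin 2 → ℝ) : perp a 0 = -a 1 := rfl

@[simp] lemma perp_apply_one (a : Fin 2 → ℝ) : perp a 1 = a 0 := rfl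

lemma dot2_self_nonneg (a : Fin 2 → ℝ) : 0 ≤ dot2 a a :=
  add_nonneg (mul_self_nonneg _) (mul_self_nonneg _)

lemma dot2_eq_dotProduct (a b : Fin 2 → ℝ) : dot2 a b = a ⬝ᵥ b := by
  simp [dot2, dotProduct, Fin.sum_univ_two]

lemma dot2_self_pos {a : Fin 2 → ℝ} (ha : a ≠ 0) : 0 < dot2 a a :=
  (dot2_self_nonneg a).lt_of_ne' fun h => ha <| dotProduct_self_eq_zero.mp <| by
    rwa [← dot2_eq_dotProduct]

lemma norm2_nonneg (a : Fin 2 → ℝ) : 0 ≤ norm2 a := sqrt_nonneg _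

lemma sq_norm2 (a : Fin 2 → ℝ) : norm2 a ^ 2 = dot2 a a := sq_sqrt (dot2_self_nonneg a)

lemma dot2_self_eq_one {a : Fin 2 → ℝ} (ha : norm2 a = 1) : dot2 a a = 1 := sqrt_eq_one.mp ha

lemma norm2_smul (r : ℝ) (a : Fin 2 → ℝ) : norm2 (r • a) = |r| * norm2 a := by
  rw [norm2, norm2, ← sqrt_sq_eq_abs, ← sqrt_mul (sq_nonneg r)]
  congr 1
  simp only [dot2, Pi.smul_apply, smul_eq_mul]; ring

lemma norm2_neg (a : Fin 2 → ℝ) : norm2 (-a) = norm2 a := by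
  simpa using norm2_smul (-1) a

lemma neg_div_norm2_eq_neg {w u : Fin 2 → ℝ} {r : ℝ} (hr : 0 < r) (hu : norm2 u = 1)
    (hw : w = r • u) : (fun i => -w i / norm2 w) = -u := by
  funext i
  rw [hw, norm2_smul, hu, abs_of_pos hr, mul_one, Pi.smul_apply, smul_eq_mul, Pi.neg_apply]
  field_simp

lemma perp_neg (a : Fin 2 → ℝ) : perp (-a) = -perp a := by
  funext i; fin_cases i <;> simp

lemma div_lt_norm2_div_norm2_iff {s c : ℝ} (hs : 0 < s) (hc : 0 < c) (a : Fin 2 → ℝ)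
    {b : Fin 2 → ℝ} (hb : b ≠ 0) :
    s / c < norm2 a / norm2 b ↔ s ^ 2 * dot2 b b < c ^ 2 * dot2 a a := by
  have hb' : 0 < norm2 b := sqrt_pos.mpr (dot2_self_pos hb)
  rw [div_lt_div_iff₀ hc hb', ← sq_lt_sq₀ (by positivity) (by positivity [norm2_nonneg a]),
    mul_pow, mul_pow, sq_norm2, sq_norm2, mul_comm (dot2 a a)]

def rotate (θ : ℝ) (v : Fin 2 → ℝ) : Fin 2 → ℝ := cos θ • v + sin θ • perp v

lemma rotate_zero (v : Fin 2 → ℝ) : rotate 0 v = v := by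
  simp [rotate]

lemma rotate_rotate (α β : ℝ) (v : Fin 2 → ℝ) : rotate α (rotate β v) = rotate (α + β) v := by
  funext i; fin_cases i <;> simp [rotate, cos_add, sin_add] <;> ring

lemma dot2_rotate_self (θ : ℝ) (v : Fin 2 → ℝ) : dot2 (rotate θ v) (rotate θ v) = dot2 v v := by
  simp [dot2, rotate]
  linear_combination (v 0 ^ 2 + v 1 ^ 2) * sin_sq_add_cos_sq θ

lemma eq_rotate_of_dot2 {v w : Fin 2 → ℝ} {φ : ℝ} (hv : dot2 v v = 1)
    (hcos : dot2 v w = cos φ) (hsin : dot2 (perp v) w = sin φ) : w = rotate φ v := by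
  funext i; fin_cases i <;> simp [rotate, ← hcos, ← hsin, dot2] at hv ⊢
  · linear_combination -(w 0) * hv
  · linear_combination -(w 1) * hv

lemma dot2_mulVec_rotate_neg_mulVec_rotate (F : Matrix (Fin 2) (Fin 2) ℝ) (θ : ℝ)
    (u : Fin 2 → ℝ) :
    dot2 (F *ᵥ rotate (-θ) u) (F *ᵥ rotate θ u) =
      cos θ ^ 2 * dot2 (F *ᵥ u) (F *ᵥ u) - sin θ ^ 2 * dot2 (F *ᵥ perp u) (F *ᵥ perp u) := by
  simp only [dot2, rotate, cos_neg, sin_neg, mulVec_add, mulVec_smul, Pi.add_apply,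
    Pi.smul_apply, smul_eq_mul]
  ring

lemma add_rotate_two_mul (θ : ℝ) (v : Fin 2 → ℝ) :
    v + rotate (2 * θ) v = (2 * cos θ) • rotate θ v := by
  funext i; fin_cases i <;> simp [rotate, cos_two_mul, sin_two_mul] <;> ring

theorem stmt3_general (θ : ℝ) (hθ : θ ∈ Set.Ioo (Real.pi/4) (Real.pi/2))
    (v₁ v₂ : Fin 2 → ℝ) (hv₁ : norm2 v₁ = 1)
    (hangle : dot2 v₁ v₂ = Real.cos (2*θ))
    (hright : dot2 (perp v₁) v₂ = Real.sin (2*θ))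
    (v₃ : Fin 2 → ℝ) (hv₃ : v₃ = fun i => -(v₁ i + v₂ i) / norm2 (fun j => v₁ j + v₂ j))
    (F : Matrix (Fin 2) (Fin 2) ℝ) (hF : F.mulVec (perp v₃) ≠ 0) :
    0 < dot2 (F.mulVec v₁) (F.mulVec v₂) ↔
      Real.sin θ / Real.cos θ < norm2 (F.mulVec v₃) / norm2 (F.mulVec (perp v₃)) := by
  obtain ⟨hθ₁, hθ₂⟩ := hθ
  have hc : 0 < cos θ := cos_pos_of_mem_Ioo ⟨by linarith [pi_pos], hθ₂⟩
  have hs : 0 < sin θ := sin_pos_of_pos_of_lt_pi (by linarith [pi_pos]) (by linarith)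
  have hv₂ : v₂ = rotate (2 * θ) v₁ := eq_rotate_of_dot2 (dot2_self_eq_one hv₁) hangle hright
  generalize hu : rotate θ v₁ = u
  have hu₁ : norm2 u = 1 := by rw [← hu, norm2, dot2_rotate_self]; exact hv₁
  have hv₃u : v₃ = -u := by
    rw [hv₃]
    refine neg_div_norm2_eq_neg (w := v₁ + v₂) (r := 2 * cos θ) (by positivity) hu₁ ?_
    rw [← hu, ← add_rotate_two_mul, hv₂]
  have h₁ : v₁ = rotate (-θ) u := by rw [← hu, rotate_rotate, neg_add_cancel, rotate_zero]
  have h₂ : v₂ = rotate θ u := by rw [hv₂, ← hu, rotate_rotate, two_mul]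
  rw [hv₃u, perp_neg, mulVec_neg, neg_ne_zero] at hF
  rw [h₁, h₂, dot2_mulVec_rotate_neg_mulVec_rotate, sub_pos, hv₃u, perp_neg, mulVec_neg,
    mulVec_neg, norm2_neg, norm2_neg, div_lt_norm2_div_norm2_iff hs hc _ hF]

theorem stmt3 (θ : ℝ) (hθ : θ ∈ Set.Ioo (Real.pi/4) (Real.pi/2))
    (v₁ v₂ : Fin 2 → ℝ) (hv₁ : norm2 v₁ = 1) (hv₂ : norm2 v₂ = 1)
    (hangle : dot2 v₁ v₂ = Real.cos (2*θ))
    (hright : dot2 (perp v₁) v₂ = Real.sin (2*θ))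
    (v₃ : Fin 2 → ℝ) (hv₃ : v₃ = fun i => -(v₁ i + v₂ i) / norm2 (fun j => v₁ j + v₂ j))
    (F : Matrix (Fin 2) (Fin 2) ℝ) (hF : F.mulVec (perp v₃) ≠ 0) :
    0 < dot2 (F.mulVec v₁) (F.mulVec v₂) ↔
      Real.sin θ / Real.cos θ < norm2 (F.mulVec v₃) / norm2 (F.mulVec (perp v₃)) :=
  stmt3_general θ hθ v₁ v₂ hv₁ hangle hright v₃ hv₃ F hF
end
end

section
/- For a unit vector v ∈ ℝ², the set {F ∈ ℝ^{2×2} : F = R(I + γ v ⊗ v^⊥), R ∈ SO(2), γ ∈ ℝ} equals the set {F ∈ ℝ^{2×2} : det F = 1 and |Fv| = 1}. -/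
noncomputable section

def IsSO2 (R : Matrix (Fin 2) (Fin 2) ℝ) : Prop := R * R.transpose = 1 ∧ R.det = 1

lemma keyA (v0 v1 a b c d : ℝ) (hv : v0^2 + v1^2 = 1)
    (p1 : a*v0 + b*v1 = v0) (p2 : c*v0 + d*v1 = v1) (p3 : a*d - b*c = 1) :
    ∃ γ : ℝ, (a = 1 + γ * (v0 * (-v1)) ∧ b = γ * (v0 * v0)) ∧
      c = γ * (v1 * (-v1)) ∧ d = 1 + γ * (v1 * v0) := by
  set x0 : ℝ := -(a-1)*v1 + b*v0 with hx0
  set x1 : ℝ := -c*v1 + (d-1)*v0 with hx1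
  set γ : ℝ := v0*x0 + v1*x1 with hγ
  set δ : ℝ := -v1*x0 + v0*x1 with hδ
  have e00 : a - 1 = (γ*v0 + δ*(-v1))*(-v1) := by
    rw [hγ, hδ, hx0, hx1]
    linear_combination v0*p1 + (v1*(-(a-1)*v1 + b*v0) - (a-1))*hv
  have e01 : b = (γ*v0 + δ*(-v1))*(v0) := by
    rw [hγ, hδ, hx0, hx1]
    linear_combination v1*p1 + (-b - v0*(-(a-1)*v1 + b*v0))*hv
  have e10 : c = (γ*v1 + δ*v0)*(-v1) := by
    rw [hγ, hδ, hx0, hx1]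
    linear_combination v0*p2 + (v1*(-c*v1 + (d-1)*v0) - c)*hv
  have e11 : d - 1 = (γ*v1 + δ*v0)*(v0) := by
    rw [hγ, hδ, hx0, hx1]
    linear_combination v1*p2 + (-(d-1) - v0*(-c*v1 + (d-1)*v0))*hv
  have hdet : a*d - b*c = 1 + δ*(v0^2+v1^2) := by
    have ha : a = 1 + (γ*v0 + δ*(-v1))*(-v1) := by linarith
    have hd : d = 1 + (γ*v1 + δ*v0)*(v0) := by linarith
    rw [ha, hd, e01, e10]; ring
  have hδ0 : δ = 0 := by rw [hv] at hdet; linarith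
  rw [hδ0] at e00 e01 e10 e11
  exact ⟨γ, ⟨by linarith [e00], by linear_combination e01⟩, by linear_combination e10,
    by linarith [e11]⟩

theorem stmt10 (v : Fin 2 → ℝ) (hv : norm2 v = 1) :
    {F : Matrix (Fin 2) (Fin 2) ℝ |
        ∃ (R : Matrix (Fin 2) (Fin 2) ℝ) (γ : ℝ), IsSO2 R ∧
          F = R * (1 + γ • Matrix.vecMulVec v (perp v))}
      = {F : Matrix (Fin 2) (Fin 2) ℝ | F.det = 1 ∧ norm2 (F.mulVec v) = 1} := by
  have hv4 : (v 0)^2 + (v 1)^2 = 1 := by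
    have := Real.sqrt_eq_one.mp hv
    rw [dot2] at this; nlinarith [this]
  ext F
  simp only [Set.mem_setOf_eq]
  constructor
  · rintro ⟨R, γ, ⟨hRo, hRd⟩, rfl⟩
    have hRo' : R.transpose * R = 1 := mul_eq_one_comm.mp hRo
    have h00 := congrFun (congrFun hRo' 0) 0
    have h01 := congrFun (congrFun hRo' 0) 1
    have h11 := congrFun (congrFun hRo' 1) 1
    simp [Matrix.mul_apply, Fin.sum_univ_two, Matrix.transpose_apply,
      Matrix.one_apply] at h00 h01 h11
    constructor
    · rw [Matrix.det_mul, hRd, one_mul, Matrix.det_fin_two]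
      simp [Matrix.add_apply, Matrix.one_apply, Matrix.smul_apply,
        Matrix.vecMulVec_apply, perp]
      ring
    · rw [norm2, Real.sqrt_eq_one, dot2]
      simp [Matrix.mulVec, dotProduct, Fin.sum_univ_two, Matrix.mul_apply,
        Matrix.add_apply, Matrix.one_apply, Matrix.smul_apply,
        Matrix.vecMulVec_apply, perp]
      linear_combination (v 0)^2 * h00 + 2 * (v 0) * (v 1) * h01 + (v 1)^2 * h11 + hv4
  · rintro ⟨hFdet, hFn⟩
    have hdet : F 0 0 * F 1 1 - F 0 1 * F 1 0 = 1 := by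
      rw [Matrix.det_fin_two] at hFdet; linarith
    have hu : (F 0 0 * v 0 + F 0 1 * v 1)^2 + (F 1 0 * v 0 + F 1 1 * v 1)^2 = 1 := by
      have := Real.sqrt_eq_one.mp hFn
      rw [dot2] at this
      simp [Matrix.mulVec, dotProduct, Fin.sum_univ_two] at this
      nlinarith [this]
    set u0 : ℝ := F 0 0 * v 0 + F 0 1 * v 1 with hu0
    set u1 : ℝ := F 1 0 * v 0 + F 1 1 * v 1 with hu1
    set cθ : ℝ := u0 * v 0 + u1 * v 1 with hcθ
    set sθ : ℝ := u1 * v 0 - u0 * v 1 with hsθ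
    have h1 : cθ^2 + sθ^2 = 1 := by
      rw [hcθ, hsθ]
      linear_combination ((v 0)^2 + (v 1)^2) * hu + hv4
    obtain ⟨γ, ⟨e1, e2⟩, e3, e4⟩ := keyA (v 0) (v 1)
      (cθ * F 0 0 + sθ * F 1 0) (cθ * F 0 1 + sθ * F 1 1)
      (-sθ * F 0 0 + cθ * F 1 0) (-sθ * F 0 1 + cθ * F 1 1) hv4
      (by rw [hcθ, hsθ, hu0, hu1]; linear_combination (v 0) * hu)
      (by rw [hcθ, hsθ, hu0, hu1]; linear_combination (v 1) * hu)
      (by linear_combination (cθ^2 + sθ^2) * hdet + h1)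
    refine ⟨!![cθ, -sθ; sθ, cθ], γ, ⟨?_, ?_⟩, ?_⟩
    · have hT : (!![cθ, -sθ; sθ, cθ]).transpose = !![cθ, sθ; -sθ, cθ] := by
        ext i j; fin_cases i <;> fin_cases j <;> rfl
      rw [hT]
      ext i j
      fin_cases i <;> fin_cases j <;>
        simp [Matrix.mul_apply, Fin.sum_univ_two, Matrix.one_apply] <;>
        first
          | linear_combination h1
          | ring
    · rw [Matrix.det_fin_two]; simp; linear_combination h1
    · ext i j
      fin_cases i <;> fin_cases j <;>
        simp [Matrix.mul_apply, Fin.sum_univ_two, Matrix.add_apply,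
          Matrix.one_apply, Matrix.smul_apply, Matrix.vecMulVec_apply, perp]
      · linear_combination cθ * e1 - sθ * e3 - F 0 0 * h1
      · linear_combination cθ * e2 - sθ * e4 - F 0 1 * h1
      · linear_combination sθ * e1 + cθ * e3 - F 1 0 * h1
      · linear_combination sθ * e2 + cθ * e4 - F 1 1 * h1
end
end

section
/- Under the same setup (θ ∈ (π/4, π/2), right-handed unit vectors v₁, v₂ at angle 2θ, v₃ = −(v₁+v₂)/|v₁+v₂|, F ∈ ℝ^{2×2} with det F = 1, |Fv₁| > 1, |Fv₂| > 1, Fv₁·Fv₂ < 0, and F_t = F(I + t v₃^⊥ ⊗ v₃)), the two solutions of |F_t v₁| = 1 have the opposite sign from the two solutions of |F_t v₂| = 1. -/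
noncomputable section

private lemma norm2_one {a : Fin 2 → ℝ} (h : norm2 a = 1) : a 0 ^ 2 + a 1 ^ 2 = 1 := by
  have := Real.sqrt_eq_one.mp h
  unfold dot2 at this
  nlinarith [this]

private lemma norm2_gt {a : Fin 2 → ℝ} (h : 1 < norm2 a) : 1 < a 0 ^ 2 + a 1 ^ 2 := by
  unfold norm2 dot2 at h
  have h0 : (0:ℝ) ≤ a 0 * a 0 + a 1 * a 1 := by nlinarith [sq_nonneg (a 0), sq_nonneg (a 1)]
  nlinarith [Real.sq_sqrt h0, Real.sqrt_nonneg (a 0 * a 0 + a 1 * a 1)]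

private lemma key1 (X Y Z S τ : ℝ) (hS : 0 < S) (hX : 1 < X) (hY : 1 < Y) (hZ : Z < 0)
    (h : (2*S-τ)^2*X + 2*(2*S-τ)*τ*Z + τ^2*Y = 4*S^2) : 0 < τ := by
  by_contra hτ
  push_neg at hτ
  nlinarith [h, mul_nonneg (by nlinarith : (0:ℝ) ≤ X + Y - 2*Z) (sq_nonneg τ),
    mul_nonneg (mul_nonneg (by linarith : (0:ℝ) ≤ 4*S) (by nlinarith : (0:ℝ) ≤ X - Z))
      (neg_nonneg.mpr hτ),
    mul_pos (mul_pos hS hS) (by linarith : (0:ℝ) < X - 1)]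

private lemma key2 (X Y Z S σ : ℝ) (hS : 0 < S) (hX : 1 < X) (hY : 1 < Y) (hZ : Z < 0)
    (h : σ^2*X - 2*σ*(2*S+σ)*Z + (2*S+σ)^2*Y = 4*S^2) : σ < 0 := by
  by_contra hσ
  push_neg at hσ
  nlinarith [h, mul_nonneg (by nlinarith : (0:ℝ) ≤ X + Y - 2*Z) (sq_nonneg σ),
    mul_nonneg (mul_nonneg (by linarith : (0:ℝ) ≤ 4*S) (by nlinarith : (0:ℝ) ≤ Y - Z)) hσ,
    mul_pos (mul_pos hS hS) (by linarith : (0:ℝ) < Y - 1)]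

set_option maxHeartbeats 1000000 in
theorem stmt12 (θ : ℝ) (hθ : θ ∈ Set.Ioo (Real.pi/4) (Real.pi/2))
    (v₁ v₂ : Fin 2 → ℝ) (hv₁ : norm2 v₁ = 1) (hv₂ : norm2 v₂ = 1)
    (hangle : dot2 v₁ v₂ = Real.cos (2*θ))
    (hright : dot2 (perp v₁) v₂ = Real.sin (2*θ))
    (v₃ : Fin 2 → ℝ) (hv₃ : v₃ = fun i => -(v₁ i + v₂ i) / norm2 (fun j => v₁ j + v₂ j))
    (F : Matrix (Fin 2) (Fin 2) ℝ) (hdet : F.det = 1)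
    (h1 : 1 < norm2 (F.mulVec v₁)) (h2 : 1 < norm2 (F.mulVec v₂))
    (hdotFF : dot2 (F.mulVec v₁) (F.mulVec v₂) < 0)
    (Ft : ℝ → Matrix (Fin 2) (Fin 2) ℝ)
    (hFt : Ft = fun t => F * (1 + t • Matrix.vecMulVec (perp v₃) v₃)) :
    ∀ t s : ℝ, norm2 ((Ft t).mulVec v₁) = 1 → norm2 ((Ft s).mulVec v₂) = 1 →
      t * s < 0 := by
  intro t s ht hs
  obtain ⟨hθ1, hθ2⟩ := hθ
  have hπ := Real.pi_pos
  set c := Real.cos θ with hcdef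
  set S := Real.sin θ with hSdef
  have hc : 0 < c := Real.cos_pos_of_mem_Ioo ⟨by linarith, hθ2⟩
  have hspos : 0 < S := Real.sin_pos_of_pos_of_lt_pi (by linarith) (by linarith)
  have pyth : S^2 + c^2 = 1 := Real.sin_sq_add_cos_sq θ
  have hcos2 : Real.cos (2*θ) = c^2 - S^2 := by
    rw [Real.cos_two_mul]; linear_combination pyth
  have hsin2 : Real.sin (2*θ) = 2*S*c := by rw [Real.sin_two_mul]
  have hab : (v₁ 0)^2 + (v₁ 1)^2 = 1 := norm2_one hv₁
  -- v₂ components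
  have e1 : v₁ 0 * v₂ 0 + v₁ 1 * v₂ 1 = c^2 - S^2 := by
    have := hangle; unfold dot2 at this; rw [hcos2] at this; linarith
  have e2 : -(v₁ 1) * v₂ 0 + v₁ 0 * v₂ 1 = 2*S*c := by
    have := hright; unfold dot2 at this
    simp only [perp, Matrix.cons_val_zero, Matrix.cons_val_one, Matrix.head_cons] at this
    rw [hsin2] at this; linarith
  have hv20 : v₂ 0 = (c^2 - S^2) * v₁ 0 - (2*S*c) * v₁ 1 := by
    linear_combination v₁ 0 * e1 - v₁ 1 * e2 - v₂ 0 * hab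
  have hv21 : v₂ 1 = (2*S*c) * v₁ 0 + (c^2 - S^2) * v₁ 1 := by
    linear_combination v₁ 1 * e1 + v₁ 0 * e2 - v₂ 1 * hab
  -- norm of the sum
  have dsum : dot2 (fun j => v₁ j + v₂ j) (fun j => v₁ j + v₂ j) = (2*c)^2 := by
    unfold dot2
    simp only []
    rw [hv20, hv21]
    linear_combination (4*c^2)*hab + ((S^2+c^2-1)*((v₁ 0)^2+(v₁ 1)^2))*pyth
  have Nsum : norm2 (fun j => v₁ j + v₂ j) = 2*c := by
    unfold norm2; rw [dsum]; exact Real.sqrt_sq (by positivity)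
  -- v₃ components
  have hv30 : v₃ 0 = S * v₁ 1 - c * v₁ 0 := by
    simp only [hv₃]
    rw [Nsum, hv20]
    field_simp
    linear_combination (v₁ 0) * pyth
  have hv31 : v₃ 1 = -(S * v₁ 0 + c * v₁ 1) := by
    simp only [hv₃]
    rw [Nsum, hv21]
    field_simp
    linear_combination (v₁ 1) * pyth
  -- key scalar identities
  have hd : v₃ 0 * v₁ 0 + v₃ 1 * v₁ 1 = -c := by
    rw [hv30, hv31]; linear_combination (-c)*hab
  have hd2 : v₃ 0 * v₂ 0 + v₃ 1 * v₂ 1 = -c := by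
    rw [hv30, hv31, hv20, hv21]
    linear_combination (-c*((v₁ 0)^2+(v₁ 1)^2))*pyth + (-c)*hab
  have hperp0 : v₁ 0 - v₂ 0 = 2*S*(-(v₃ 1)) := by
    rw [hv31, hv20]; linear_combination (-(v₁ 0))*pyth
  have hperp1 : v₁ 1 - v₂ 1 = 2*S*(v₃ 0) := by
    rw [hv30, hv21]; linear_combination (-(v₁ 1))*pyth
  -- inner matrix action
  have hB : ∀ (r : ℝ) (w : Fin 2 → ℝ),
      (1 + r • Matrix.vecMulVec (perp v₃) v₃).mulVec w
        = fun i => w i + r * (perp v₃ i) * (v₃ 0 * w 0 + v₃ 1 * w 1) := by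
    intro r w
    funext i
    simp [Matrix.mulVec, dotProduct, Fin.sum_univ_two, Matrix.one_apply,
      Matrix.vecMulVec_apply, Matrix.add_apply]
    fin_cases i <;> simp <;> ring
  -- the vector identities
  have hvec1 : ∀ i, 2*S*((Ft t).mulVec v₁ i)
      = (2*S - t*c) * F.mulVec v₁ i + (t*c) * F.mulVec v₂ i := by
    intro i
    have : (Ft t).mulVec v₁ = F.mulVec ((1 + t • Matrix.vecMulVec (perp v₃) v₃).mulVec v₁) := by
      rw [hFt]; simp only []; rw [Matrix.mulVec_mulVec]
    rw [this, hB]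
    simp only [Matrix.mulVec, dotProduct, Fin.sum_univ_two, perp,
      Matrix.cons_val_zero, Matrix.cons_val_one, Matrix.head_cons]
    linear_combination (2*S*t*(-(v₃ 1))*F i 0 + 2*S*t*(v₃ 0)*F i 1) * hd
      + (t*c*F i 0)*hperp0 + (t*c*F i 1)*hperp1
  have hvec2 : ∀ i, 2*S*((Ft s).mulVec v₂ i)
      = (-(s*c)) * F.mulVec v₁ i + (2*S + s*c) * F.mulVec v₂ i := by
    intro i
    have : (Ft s).mulVec v₂ = F.mulVec ((1 + s • Matrix.vecMulVec (perp v₃) v₃).mulVec v₂) := by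
      rw [hFt]; simp only []; rw [Matrix.mulVec_mulVec]
    rw [this, hB]
    simp only [Matrix.mulVec, dotProduct, Fin.sum_univ_two, perp,
      Matrix.cons_val_zero, Matrix.cons_val_one, Matrix.head_cons]
    linear_combination (2*S*s*(-(v₃ 1))*F i 0 + 2*S*s*(v₃ 0)*F i 1) * hd2
      + (s*c*F i 0)*hperp0 + (s*c*F i 1)*hperp1
  -- image data
  have hX : 1 < (F.mulVec v₁ 0)^2 + (F.mulVec v₁ 1)^2 := norm2_gt h1
  have hY : 1 < (F.mulVec v₂ 0)^2 + (F.mulVec v₂ 1)^2 := norm2_gt h2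
  have hZ : F.mulVec v₁ 0 * F.mulVec v₂ 0 + F.mulVec v₁ 1 * F.mulVec v₂ 1 < 0 := by
    have := hdotFF; unfold dot2 at this; linarith
  -- quadratic equations
  have dt : ((Ft t).mulVec v₁ 0)^2 + ((Ft t).mulVec v₁ 1)^2 = 1 := norm2_one ht
  have ds : ((Ft s).mulVec v₂ 0)^2 + ((Ft s).mulVec v₂ 1)^2 = 1 := norm2_one hs
  have eqt : (2*S - t*c)^2*((F.mulVec v₁ 0)^2 + (F.mulVec v₁ 1)^2)
      + 2*(2*S - t*c)*(t*c)*(F.mulVec v₁ 0 * F.mulVec v₂ 0 + F.mulVec v₁ 1 * F.mulVec v₂ 1)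
      + (t*c)^2*((F.mulVec v₂ 0)^2 + (F.mulVec v₂ 1)^2) = 4*S^2 := by
    have h0 := hvec1 0
    have h1' := hvec1 1
    linear_combination (-((2*S - t*c)*(F.mulVec v₁ 0) + (t*c)*(F.mulVec v₂ 0) + 2*S*((Ft t).mulVec v₁ 0))) * h0
      + (-((2*S - t*c)*(F.mulVec v₁ 1) + (t*c)*(F.mulVec v₂ 1) + 2*S*((Ft t).mulVec v₁ 1))) * h1'
      + (4*S^2) * dt
  have eqs : (s*c)^2*((F.mulVec v₁ 0)^2 + (F.mulVec v₁ 1)^2)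
      - 2*(s*c)*(2*S + s*c)*(F.mulVec v₁ 0 * F.mulVec v₂ 0 + F.mulVec v₁ 1 * F.mulVec v₂ 1)
      + (2*S + s*c)^2*((F.mulVec v₂ 0)^2 + (F.mulVec v₂ 1)^2) = 4*S^2 := by
    have h0 := hvec2 0
    have h1' := hvec2 1
    linear_combination (-((-(s*c))*(F.mulVec v₁ 0) + (2*S + s*c)*(F.mulVec v₂ 0) + 2*S*((Ft s).mulVec v₂ 0))) * h0
      + (-((-(s*c))*(F.mulVec v₁ 1) + (2*S + s*c)*(F.mulVec v₂ 1) + 2*S*((Ft s).mulVec v₂ 1))) * h1'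
      + (4*S^2) * ds
  have htpos : 0 < t * c := key1 _ _ _ S (t*c) hspos hX hY hZ eqt
  have hsneg : s * c < 0 := key2 _ _ _ S (s*c) hspos hX hY hZ eqs
  have h9 : 0 < (t*c)*(-(s*c)) := mul_pos htpos (neg_pos.mpr hsneg)
  have h10 : t*s = -(((t*c)*(-(s*c)))/(c^2)) := by field_simp
  rw [h10]
  have h11 := div_pos h9 (pow_pos hc 2)
  linarith [h11]
end
end
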